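/- arXiv:1503.03018 — 7 statements merged into one kernel-verified Lean document; each statement's English description precedes it below -/
import Mathlib

section
/- The fixed point sequence u agrees with every finite inflation: for every n and every index i < 3^n, u i equals the i-th letter of the n-th iterate of σ₁* on [X]. -/
/-- Variation 1 of the substitution: X = false ↦ XYY, Y = true ↦ XXY. -/
def sigma1 : Bool → List Bool
  | false => [false, true, true]
  | true  => [false, false, true]

/-- The induced map on words. -/
def sigma1Star (w : List Bool) : List Bool := w.flatMap sigma1

lemma sigma1Star_cons (b : Bool) (w : List Bool) :
    sigma1Star (b :: w) = sigma1 b ++ sigma1Star w := by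
  simp [sigma1Star]

lemma sigma1_length (b : Bool) : (sigma1 b).length = 3 := by cases b <;> rfl

lemma sigma1Star_length (w : List Bool) : (sigma1Star w).length = 3 * w.length := by
  induction w with
  | nil => rfl
  | cons b w ih =>
    rw [sigma1Star_cons, List.length_append, sigma1_length, ih, List.length_cons]
    ring

lemma getD0 (w : List Bool) (k : ℕ) (hk : k < w.length) :
    (sigma1Star w).getD (3 * k) false = false := by
  induction w generalizing k with
  | nil => simp at hk
  | cons b w ih =>
    rw [sigma1Star_cons]
    cases k with
    | zero => cases b <;> rfl
    | succ k =>
      have : 3 * (k + 1) = (sigma1 b).length + 3 * k := by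
        rw [sigma1_length]; ring
      rw [this, List.getD_append_right _ _ _ _ (Nat.le_add_right _ _)]
      simp only [Nat.add_sub_cancel_left]
      exact ih k (by simpa using Nat.lt_of_succ_lt_succ (by simpa using hk))

lemma getD1 (w : List Bool) (k : ℕ) (hk : k < w.length) :
    (sigma1Star w).getD (3 * k + 1) false = !(w.getD k false) := by
  induction w generalizing k with
  | nil => simp at hk
  | cons b w ih =>
    rw [sigma1Star_cons]
    cases k with
    | zero => cases b <;> rfl
    | succ k =>
      have : 3 * (k + 1) + 1 = (sigma1 b).length + (3 * k + 1) := by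
        rw [sigma1_length]; ring
      rw [this, List.getD_append_right _ _ _ _ (Nat.le_add_right _ _)]
      simp only [Nat.add_sub_cancel_left]
      rw [ih k (by simpa using Nat.lt_of_succ_lt_succ (by simpa using hk))]
      rfl

lemma getD2 (w : List Bool) (k : ℕ) (hk : k < w.length) :
    (sigma1Star w).getD (3 * k + 2) false = true := by
  induction w generalizing k with
  | nil => simp at hk
  | cons b w ih =>
    rw [sigma1Star_cons]
    cases k with
    | zero => cases b <;> rfl
    | succ k =>
      have : 3 * (k + 1) + 2 = (sigma1 b).length + (3 * k + 2) := by
        rw [sigma1_length]; ring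
      rw [this, List.getD_append_right _ _ _ _ (Nat.le_add_right _ _)]
      simp only [Nat.add_sub_cancel_left]
      exact ih k (by simpa using Nat.lt_of_succ_lt_succ (by simpa using hk))

lemma iter_length (n : ℕ) : (sigma1Star^[n] [false]).length = 3 ^ n := by
  induction n with
  | zero => rfl
  | succ n ih =>
    rw [Function.iterate_succ_apply', sigma1Star_length, ih, pow_succ]
    ring

/-- The fixed point sequence `u` agrees with every finite inflation: for every `n`
and every index `i < 3 ^ n`, `u i` equals the `i`-th letter of the `n`-th iterate
of `σ₁*` on `[X]`. -/
theorem fixed_point_agrees_with_inflation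
    (u : ℕ → Bool)
    (h0 : ∀ n, u (3 * n) = false)
    (h1 : ∀ n, u (3 * n + 1) = !(u n))
    (h2 : ∀ n, u (3 * n + 2) = true) :
    ∀ n : ℕ, ∀ i : ℕ, i < 3 ^ n → u i = (sigma1Star^[n] [false]).getD i false := by
  intro n
  induction n with
  | zero =>
    intro i hi
    interval_cases i
    simpa using h0 0
  | succ n ih =>
    intro i hi
    set k := i / 3 with hkdef
    have hk : k < 3 ^ n := by
      rw [hkdef]
      exact Nat.div_lt_of_lt_mul (by rw [pow_succ] at hi; omega)
    have hklen : k < (sigma1Star^[n] [false]).length := by rw [iter_length]; exact hk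
    have hr : i % 3 < 3 := Nat.mod_lt _ (by norm_num)
    have hi3 : i = 3 * k + i % 3 := by omega
    rw [Function.iterate_succ_apply']
    interval_cases h : i % 3
    · rw [hi3]; simp only [Nat.add_zero]; rw [h0, getD0 _ _ hklen]
    · rw [hi3, h1, getD1 _ _ hklen, ih k hk]
    · rw [hi3, h2, getD2 _ _ hklen]
end

section
/- The fixed point u of the substitution σ₁ is not eventually periodic: there exist no p > 0 and N such that u(n + p) = u(n) for all n ≥ N. In particular the substitution tiling pattern along the long diagonal is aperiodic and cannot be derived by translational symmetry. -/
/-- The fixed point `u` of the substitution `σ₁` (X ↦ XYY, Y ↦ XXY, with X = false,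
Y = true) is not eventually periodic: there exist no `p > 0` and `N` such that
`u (n + p) = u n` for all `n ≥ N`. -/
theorem fixed_point_not_eventually_periodic
    (u : ℕ → Bool)
    (h0 : ∀ n, u (3 * n) = false)
    (h1 : ∀ n, u (3 * n + 1) = !(u n))
    (h2 : ∀ n, u (3 * n + 2) = true) :
    ¬ ∃ p : ℕ, 0 < p ∧ ∃ N : ℕ, ∀ n ≥ N, u (n + p) = u n := by
  suffices h : ∀ p, 0 < p → ∀ N : ℕ, ¬ ∀ n ≥ N, u (n + p) = u n by
    rintro ⟨p, hp, N, hN⟩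
    exact h p hp N hN
  intro p
  induction p using Nat.strong_induction_on with
  | _ p ih =>
    intro hp N hper
    have hmod := Nat.mod_lt p (show 0 < 3 by norm_num)
    interval_cases h : p % 3
    · -- p = 3 * q
      obtain ⟨q, hq⟩ : ∃ q, p = 3 * q := ⟨p / 3, by omega⟩
      have hq0 : 0 < q := by omega
      have hqp : q < p := by omega
      refine ih q hqp hq0 N ?_
      intro n hn
      have h3n : 3 * n + 1 ≥ N := by omega
      have := hper (3 * n + 1) h3n
      rw [hq] at this
      have e : 3 * n + 1 + 3 * q = 3 * (n + q) + 1 := by ring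
      rw [e, h1, h1] at this
      simpa using this
    · -- p = 3k + 1 : take n = 3 * (3*N+2) + 1
      obtain ⟨k, hk⟩ : ∃ k, p = 3 * k + 1 := ⟨p / 3, by omega⟩
      have hn : 3 * (3 * N + 2) + 1 ≥ N := by omega
      have := hper (3 * (3 * N + 2) + 1) hn
      have e : 3 * (3 * N + 2) + 1 + p = 3 * (3 * N + 2 + k) + 2 := by omega
      rw [e, h2, h1, h2] at this
      simp at this
    · -- p = 3k + 2 : take n = 3 * N
      obtain ⟨k, hk⟩ : ∃ k, p = 3 * k + 2 := ⟨p / 3, by omega⟩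
      have hn : 3 * N ≥ N := by omega
      have := hper (3 * N) hn
      have e : 3 * N + p = 3 * (N + k) + 2 := by omega
      rw [e, h2, h0] at this
      simp at this
end

section
/- For every n, twice the number of indices i < 3^n with u i = X equals 3^n + (−1)^n; equivalently, the n-th inflation of a single X-tile contains (3^n + (−1)^n)/2 letters X and (3^n − (−1)^n)/2 letters Y. -/
lemma sum_range_mul3 (f : ℕ → ℤ) (m : ℕ) :
    ∑ i ∈ Finset.range (3 * m), f i =
      ∑ k ∈ Finset.range m, (f (3 * k) + f (3 * k + 1) + f (3 * k + 2)) := by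
  induction m with
  | zero => simp
  | succ m ih =>
      have h : 3 * (m + 1) = (3 * m + 1) + 1 + 1 := by ring
      rw [h, Finset.sum_range_succ, Finset.sum_range_succ, Finset.sum_range_succ, ih,
        Finset.sum_range_succ]
      ring

lemma count_aux (u : ℕ → Bool)
    (h0 : ∀ n, u (3 * n) = false)
    (h1 : ∀ n, u (3 * n + 1) = !(u n))
    (h2 : ∀ n, u (3 * n + 2) = true) (m : ℕ) :
    (((Finset.range (3 * m)).filter (fun i => u i = false)).card : ℤ)
      + ((Finset.range m).filter (fun i => u i = false)).card = 2 * m := by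
  have hc : ∀ N : ℕ, (((Finset.range N).filter (fun i => u i = false)).card : ℤ)
      = ∑ i ∈ Finset.range N, (if u i = false then (1 : ℤ) else 0) := by
    intro N
    rw [Finset.card_filter]
    push_cast
    rfl
  rw [hc, hc, sum_range_mul3, ← Finset.sum_add_distrib]
  have : ∀ k ∈ Finset.range m,
      ((if u (3 * k) = false then (1 : ℤ) else 0) + (if u (3 * k + 1) = false then 1 else 0)
        + (if u (3 * k + 2) = false then 1 else 0)) + (if u k = false then 1 else 0) = 2 := by
    intro k _
    rw [h0, h1, h2]
    cases u k <;> simp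
  rw [Finset.sum_congr rfl this]
  simp [mul_comm]

/-- For every `n`, twice the number of indices `i < 3 ^ n` with `u i = X` (X = false)
equals `3 ^ n + (−1) ^ n`, where `u` is the fixed point of the substitution
X ↦ XYY, Y ↦ XXY. -/
theorem fixed_point_letter_count
    (u : ℕ → Bool)
    (h0 : ∀ n, u (3 * n) = false)
    (h1 : ∀ n, u (3 * n + 1) = !(u n))
    (h2 : ∀ n, u (3 * n + 2) = true) :
    ∀ n : ℕ,
      2 * (((Finset.range (3 ^ n)).filter (fun i => u i = false)).card : ℤ) =
        3 ^ n + (-1) ^ n := by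
  intro n
  induction n with
  | zero =>
      have hu0 : u 0 = false := by simpa using h0 0
      simp [Finset.range_one, Finset.filter_singleton, hu0]
  | succ n ih =>
      have key := count_aux u h0 h1 h2 (3 ^ n)
      rw [← pow_succ'] at key
      have : (((Finset.range (3 ^ (n + 1))).filter (fun i => u i = false)).card : ℤ)
          = 2 * 3 ^ n - ((Finset.range (3 ^ n)).filter (fun i => u i = false)).card := by
        push_cast at key ⊢
        linarith
      rw [this]
      push_cast
      ring_nf
      ring_nf at ih
      linarith
end

section
/- The frequency of the letter X in the fixed point u is 1/2: the sequence N ↦ (#{i < N : u i = X}) / N (as real numbers) tends to 1/2 as N → ∞. Thus, for a large portion of the pattern, the ratio of the numbers of the two kinds of letters approaches unity. -/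
/-!
Weight the letters by `X ↦ 1`, `Y ↦ -1`. Both images `XYY` and `XXY` have total weight minus the
weight of the letter they replace, so the discrepancy `D N = #X - #Y` among the first `N` letters
satisfies `D (3m) = -D m`; cutting a prefix of length `N` after its last complete block costs at
most `N % 3 ≤ 2`, so `|D N + D (N / 3)| ≤ 2` and hence `|D N| = O(log N) = o(N)`.
-/

open Filter Finset Asymptotics

theorem abs_le_mul_of_abs_add_div_le {b : ℕ} {f : ℕ → ℝ} {C : ℝ} (h0 : f 0 = 0)
    (h : ∀ n, |f n + f (n / b)| ≤ C) : ∀ k n : ℕ, n < b ^ k → |f n| ≤ C * k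
  | 0, n, hn => by
    obtain rfl : n = 0 := by simpa only [pow_zero, Nat.lt_one_iff] using hn
    simp [h0]
  | k + 1, n, hn => by
    have hdiv : |f (n / b)| ≤ C * k :=
      abs_le_mul_of_abs_add_div_le h0 h k _ (Nat.div_lt_of_lt_mul (by rwa [← pow_succ']))
    calc |f n| = |(f n + f (n / b)) - f (n / b)| := by ring_nf
      _ ≤ |f n + f (n / b)| + |f (n / b)| := abs_sub _ _
      _ ≤ C + C * k := add_le_add (h n) hdiv
      _ = C * (k + 1 : ℕ) := by push_cast; ring

section BlockSums

variable {b : ℕ} {w : ℕ → ℝ}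

theorem sum_range_mul_eq_neg (hw : ∀ n, ∑ j ∈ range b, w (b * n + j) = -w n) (m : ℕ) :
    ∑ i ∈ range (b * m), w i = -∑ i ∈ range m, w i := by
  induction m with
  | zero => simp
  | succ m ih => rw [Nat.mul_succ, sum_range_add, ih, hw, sum_range_succ]; ring

theorem abs_sum_range_add_sum_range_div_le (hw : ∀ n, ∑ j ∈ range b, w (b * n + j) = -w n)
    (hw1 : ∀ i, |w i| ≤ 1) (N : ℕ) :
    |∑ i ∈ range N, w i + ∑ i ∈ range (N / b), w i| ≤ (N % b : ℕ) := by
  have hsplit : ∑ i ∈ range N, w i =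
      ∑ i ∈ range (b * (N / b)), w i + ∑ j ∈ range (N % b), w (b * (N / b) + j) := by
    rw [← sum_range_add, Nat.div_add_mod]
  rw [hsplit, sum_range_mul_eq_neg hw, neg_add_cancel_comm]
  calc |∑ j ∈ range (N % b), w (b * (N / b) + j)|
      ≤ ∑ j ∈ range (N % b), |w (b * (N / b) + j)| := abs_sum_le_sum_abs _ _
    _ ≤ ∑ _j ∈ range (N % b), 1 := sum_le_sum fun j _ => hw1 _
    _ = (N % b : ℕ) := by rw [sum_const, card_range, nsmul_one]

theorem tendsto_sum_range_div_atTop_nhds_zero (hb : 1 < b)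
    (hw : ∀ n, ∑ j ∈ range b, w (b * n + j) = -w n) (hw1 : ∀ i, |w i| ≤ 1) :
    Tendsto (fun N : ℕ => (∑ i ∈ range N, w i) / N) atTop (nhds 0) := by
  have hbound (N : ℕ) : |∑ i ∈ range N, w i| ≤ (b - 1 : ℝ) * (Nat.log b N + 1) := by
    have hC (n : ℕ) : |∑ i ∈ range n, w i + ∑ i ∈ range (n / b), w i| ≤ b - 1 := by
      refine (abs_sum_range_add_sum_range_div_le hw hw1 n).trans ?_
      have : n % b + 1 ≤ b := Nat.mod_lt n (by omega)
      rw [le_sub_iff_add_le]; exact_mod_cast this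
    exact_mod_cast abs_le_mul_of_abs_add_div_le (by simp) hC _ N (Nat.lt_pow_succ_log_self hb N)
  have hlog : (fun x : ℝ => (b - 1 : ℝ) * (Real.logb b x + 1)) =o[atTop] id :=
    (Real.isLittleO_logb_id_atTop.add (isLittleO_const_id_atTop 1)).const_mul_left _
  refine IsLittleO.tendsto_div_nhds_zero <|
    (IsBigO.of_bound 1 (Eventually.of_forall fun N => ?_)).trans_isLittleO
      (hlog.comp_tendsto tendsto_natCast_atTop_atTop)
  have hb1 : (0 : ℝ) ≤ b - 1 := by
    rw [sub_nonneg]; exact_mod_cast hb.le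
  calc ‖∑ i ∈ range N, w i‖ ≤ (b - 1 : ℝ) * (Nat.log b N + 1) := hbound N
    _ ≤ (b - 1 : ℝ) * (Real.logb b N + 1) := by gcongr; exact Real.natLog_le_logb N b
    _ ≤ 1 * ‖(b - 1 : ℝ) * (Real.logb b N + 1)‖ := by rw [one_mul]; exact le_abs_self _

end BlockSums

theorem two_mul_card_filter_eq_false (u : ℕ → Bool) (N : ℕ) :
    (2 * #{i ∈ range N | u i = false} : ℝ) = N + ∑ i ∈ range N, if u i then -1 else 1 := by
  have hN : (N : ℝ) = ∑ _i ∈ range N, 1 := by simp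
  rw [natCast_card_filter, mul_sum, hN, ← sum_add_distrib]
  refine sum_congr rfl fun i _ => ?_
  cases u i <;> norm_num

/-- The frequency of the letter X (= false) in the fixed point `u` of the substitution
X ↦ XYY, Y ↦ XXY is 1/2: the sequence `N ↦ #{i < N : u i = X} / N` tends to `1/2`. -/
theorem fixed_point_letter_frequency
    (u : ℕ → Bool)
    (h0 : ∀ n, u (3 * n) = false)
    (h1 : ∀ n, u (3 * n + 1) = !(u n))
    (h2 : ∀ n, u (3 * n + 2) = true) :
    Tendsto
      (fun N : ℕ =>
        (((Finset.range N).filter (fun i => u i = false)).card : ℝ) / (N : ℝ))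
      atTop (nhds (1 / 2)) := by
  set w : ℕ → ℝ := fun i => if u i then -1 else 1 with hw_def
  have hblock (n : ℕ) : ∑ j ∈ range 3, w (3 * n + j) = -w n := by
    simp only [sum_range_succ, sum_range_zero, add_zero, hw_def, h0, h1, h2]
    cases u n <;> norm_num
  have hw1 (i : ℕ) : |w i| ≤ 1 := by
    simp only [hw_def]; split <;> norm_num
  have hD := tendsto_sum_range_div_atTop_nhds_zero (by norm_num) hblock hw1
  have hlim : Tendsto (fun N : ℕ => 1 / 2 + (∑ i ∈ range N, w i) / N / 2)
      atTop (nhds (1 / 2)) := by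
    simpa only [zero_div, add_zero] using (hD.div_const 2).const_add (1 / 2)
  refine hlim.congr' ?_
  filter_upwards [eventually_ne_atTop 0] with N hN
  have hcount := two_mul_card_filter_eq_false u N
  field_simp
  linarith
end

section
/- The fixed point of variation 2 is the letter-complement of the fixed point of variation 1: the sequence v = not ∘ u satisfies v(3n) = true, v(3n+1) = !(v n), and v(3n+2) = false for all n (i.e. v(3n+r) = (σ₂ (v n)).get r), and v is not eventually periodic. Hence variation 2 also generates an aperiodic pattern, slightly different from variation 1. -/
lemma u_aperiodic_aux
    (u : ℕ → Bool)
    (h0 : ∀ n, u (3 * n) = false)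
    (h1 : ∀ n, u (3 * n + 1) = !(u n))
    (h2 : ∀ n, u (3 * n + 2) = true) :
    ∀ p : ℕ, 0 < p → ∀ N : ℕ, ¬ ∀ n ≥ N, u (n + p) = u n := by
  intro p
  induction p using Nat.strong_induction_on with
  | _ p ih =>
    intro hp N h
    have hr3 : p % 3 = 0 ∨ p % 3 = 1 ∨ p % 3 = 2 := by omega
    rcases hr3 with hr | hr | hr
    · -- p = 3q, reduce to smaller period q
      set q := p / 3 with hq
      have hpq : p = 3 * q := by omega
      have hqpos : 0 < q := by omega
      have hqlt : q < p := by omega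
      apply ih q hqlt hqpos N
      intro n hn
      have := h (3 * n + 1) (by omega)
      rw [show 3 * n + 1 + p = 3 * (n + q) + 1 by omega, h1, h1] at this
      exact Bool.not_inj this
    · -- p ≡ 1 mod 3: use n = 3N + 2
      have := h (3 * N + 2) (by omega)
      rw [show 3 * N + 2 + p = 3 * (N + (p / 3) + 1) by omega, h0, h2] at this
      simp at this
    · -- p ≡ 2 mod 3: use n = 3N
      have := h (3 * N) (by omega)
      rw [show 3 * N + p = 3 * (N + p / 3) + 2 by omega, h2, h0] at this
      simp at this

/-- The fixed point of variation 2 is the letter-complement of the fixed point of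
variation 1: `v = not ∘ u` satisfies `v (3n) = true`, `v (3n+1) = !(v n)`,
`v (3n+2) = false` for all `n`, and `v` is not eventually periodic. -/
theorem variation2_fixed_point_complement
    (u : ℕ → Bool)
    (h0 : ∀ n, u (3 * n) = false)
    (h1 : ∀ n, u (3 * n + 1) = !(u n))
    (h2 : ∀ n, u (3 * n + 2) = true) :
    (∀ n : ℕ, (not ∘ u) (3 * n) = true ∧
        (not ∘ u) (3 * n + 1) = !((not ∘ u) n) ∧
        (not ∘ u) (3 * n + 2) = false) ∧
    ¬ ∃ p : ℕ, 0 < p ∧ ∃ N : ℕ, ∀ n ≥ N, (not ∘ u) (n + p) = (not ∘ u) n := by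
  constructor
  · intro n
    refine ⟨by simp [Function.comp, h0], by simp [Function.comp, h1], by simp [Function.comp, h2]⟩
  · rintro ⟨p, hp, N, h⟩
    exact u_aperiodic_aux u h0 h1 h2 p hp N
      (fun n hn => Bool.not_inj (h n hn))
end

section
/- Count of letters in the inflated word: for every n, twice the number of occurrences of X in the n-th iterate of σ₁* on the one-letter word [X] equals 3^n + (−1)^n, and twice the number of occurrences of Y equals 3^n − (−1)^n. -/
lemma count_step (w : List Bool) :
    (sigma1Star w).count false = w.count false + 2 * w.count true ∧
    (sigma1Star w).count true = 2 * w.count false + w.count true := by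
  induction w with
  | nil => simp [sigma1Star]
  | cons b t ih =>
    cases b <;>
      simp only [sigma1Star, List.flatMap_cons, List.count_append, List.count_cons] at * <;>
      simp [sigma1] <;> omega

/-- For every `n`, twice the number of occurrences of X (= false) in the `n`-th iterate
of `σ₁*` on `[X]` equals `3 ^ n + (−1) ^ n`, and twice the number of occurrences of
Y (= true) equals `3 ^ n − (−1) ^ n`. -/
theorem inflated_word_letter_counts (n : ℕ) :
    2 * (((sigma1Star^[n] [false]).count false : ℤ)) = 3 ^ n + (-1) ^ n ∧
    2 * (((sigma1Star^[n] [false]).count true : ℤ)) = 3 ^ n - (-1) ^ n := by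
  induction n with
  | zero => simp
  | succ n ih =>
    obtain ⟨h1, h2⟩ := ih
    rw [Function.iterate_succ_apply']
    obtain ⟨c1, c2⟩ := count_step (sigma1Star^[n] [false])
    rw [c1, c2]
    push_cast
    constructor <;> ring_nf <;> ring_nf at h1 h2 ⊢ <;> linarith
end

section
/- The fixed point u is not periodic with any period: for every p > 0 there exists n with u(n + p) ≠ u(n); moreover u is not equal to any sequence obtained from itself by a nonzero shift, i.e. for every p > 0 the sequences n ↦ u(n) and n ↦ u(n + p) differ. (The overall scheme is aperiodic and cannot be derived by translational symmetry.) -/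
/-- The fixed point `u` of X ↦ XYY, Y ↦ XXY is not periodic with any period: for every
`p > 0` there exists `n` with `u (n + p) ≠ u n`; moreover, for every `p > 0` the
sequence `u` differs from its shift by `p`. -/
theorem fixed_point_no_period
    (u : ℕ → Bool)
    (h0 : ∀ n, u (3 * n) = false)
    (h1 : ∀ n, u (3 * n + 1) = !(u n))
    (h2 : ∀ n, u (3 * n + 2) = true) :
    (∀ p : ℕ, 0 < p → ∃ n : ℕ, u (n + p) ≠ u n) ∧
    (∀ p : ℕ, 0 < p → (fun n : ℕ => u n) ≠ (fun n : ℕ => u (n + p))) := by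
  have key : ∀ p : ℕ, 0 < p → ∃ n : ℕ, u (n + p) ≠ u n := by
    intro p
    induction p using Nat.strong_induction_on with
    | _ p ih =>
      intro hp
      by_contra h
      push_neg at h
      have hq : p = 3 * (p / 3) + p % 3 := (Nat.div_add_mod p 3).symm
      set q := p / 3 with hqdef
      have hr : p % 3 < 3 := Nat.mod_lt _ (by norm_num)
      interval_cases hcase : p % 3
      · -- p = 3q
        have hq0 : 0 < q := by omega
        have hqlt : q < p := by omega
        have hper : ∀ n, u (n + q) = u n := by
          intro n
          have e1 : u (3 * n + 1 + p) = u (3 * n + 1) := h _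
          have e2 : 3 * n + 1 + p = 3 * (n + q) + 1 := by omega
          rw [e2, h1, h1] at e1
          simpa using e1
        obtain ⟨n, hn⟩ := ih q hqlt hq0
        exact hn (hper n)
      · -- p ≡ 1: use n = 2
        have e1 : u (2 + p) = u 2 := h 2
        have e2 : 2 + p = 3 * (q + 1) := by omega
        have e3 : (2 : ℕ) = 3 * 0 + 2 := by norm_num
        rw [e2, h0, e3, h2] at e1
        exact absurd e1 (by simp)
      · -- p ≡ 2: use n = 0
        have e1 : u (0 + p) = u 0 := h 0
        have e2 : 0 + p = 3 * q + 2 := by omega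
        have e3 : (0 : ℕ) = 3 * 0 := by norm_num
        rw [e2, h2, e3, h0] at e1
        exact absurd e1 (by simp)
  refine ⟨key, fun p hp heq => ?_⟩
  obtain ⟨n, hn⟩ := key p hp
  exact hn (congrFun heq n).symm
end
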